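/- Let (Γ, w, m) be a stable weighted n-marked graph of genus g. Then |E(Γ)| ≤ 3g − 3 + n and |V(Γ)| ≤ 2g − 2 + n. Consequently, for fixed g and n with 2g − 2 + n > 0 there are only finitely many isomorphism classes of stable weighted n-marked graphs of genus g. -/

import Mathlib

/-!
Summing the stability excesses `2 w(v) - 2 + n_v ≥ 1` over the vertices gives, by the handshake
identity `∑ val v = 2 |E|`, exactly `2g - 2 + n`; hence `|V| ≤ 2g - 2 + n`, and then
`|E| = g - 1 + |V| - ∑ w ≤ 3g - 3 + n`. These bounds also bound the number of half-edges and the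
weights, so transporting the involution, the endpoint map, the weights and the markings to
`Fin |H|` and `Fin |V|` maps stable graphs of genus `g` into a finite set, and graphs with the same
image are isomorphic.
-/

/-- A multigraph given by half-edges: a finite set of half-edges with a
fixed-point-free involution (whose orbits are the edges) and an endpoint
map to a finite set of vertices. -/
structure Multigraph where
  V : Type
  H : Type
  [fintypeV : Fintype V]
  [fintypeH : Fintype H]
  [decV : DecidableEq V]
  [decH : DecidableEq H]
  ι : H → H
  ι_invol : ∀ h, ι (ι h) = h
  ι_ne : ∀ h, ι h ≠ h
  ep : H → V

attribute [instance] Multigraph.fintypeV Multigraph.fintypeH Multigraph.decV Multigraph.decH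

namespace Multigraph

variable (G : Multigraph)

/-- Two half-edges lie in the same edge iff they agree or are swapped by the involution. -/
def edgeSetoid : Setoid G.H where
  r a b := b = a ∨ b = G.ι a
  iseqv := by
    refine ⟨fun a => Or.inl rfl, ?_, ?_⟩
    · rintro a b (rfl | rfl)
      · exact Or.inl rfl
      · exact Or.inr (G.ι_invol a).symm
    · rintro a b c (rfl | rfl) (rfl | rfl)
      · exact Or.inl rfl
      · exact Or.inr rfl
      · exact Or.inr rfl
      · exact Or.inl (G.ι_invol a)

/-- The set of edges: orbits of the involution. -/
def E : Type := Quotient G.edgeSetoid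

instance : Fintype G.E :=
  @Quotient.fintype _ _ G.edgeSetoid
    (fun a b => inferInstanceAs (Decidable (b = a ∨ b = G.ι a)))

/-- Number of edges. -/
def numE : ℕ := Fintype.card G.E

/-- Number of vertices. -/
def numV : ℕ := Fintype.card G.V

/-- First Betti number `b₁(Γ) = |E(Γ)| − |V(Γ)| + 1`. -/
def b1 : ℤ := (G.numE : ℤ) - (G.numV : ℤ) + 1

/-- Adjacency relation on vertices. -/
def Adj (u v : G.V) : Prop := ∃ h : G.H, G.ep h = u ∧ G.ep (G.ι h) = v

/-- A multigraph is connected if it has a vertex and any two vertices are joined by a walk. -/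
def Connected : Prop := Nonempty G.V ∧ ∀ u v : G.V, Relation.ReflTransGen G.Adj u v

/-- The valence of a vertex: the number of half-edges attached to it. -/
def val (v : G.V) : ℕ := Fintype.card {h : G.H // G.ep h = v}

/-- A cycle is a nonempty closed edge-walk with no backtracking. -/
def HasCycle : Prop :=
  ∃ n : ℕ, 0 < n ∧ ∃ c : ZMod n → G.H,
    (∀ i, G.ep (G.ι (c i)) = G.ep (c (i + 1))) ∧ ∀ i, c (i + 1) ≠ G.ι (c i)

/-- Genus of a weighted graph: `b₁(Γ) + Σ_v w(v)`. -/
def genus (w : G.V → ℕ) : ℤ := G.b1 + ∑ v : G.V, (w v : ℤ)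

/-- Number of markings at a vertex. -/
def nMark {n : ℕ} (m : Fin n → G.V) (v : G.V) : ℕ := Fintype.card {i : Fin n // m i = v}

/-- `n_v = val(v) + |m⁻¹(v)|`. -/
def nv {n : ℕ} (m : Fin n → G.V) (v : G.V) : ℕ := G.val v + G.nMark m v

/-- Stability: `2w(v) − 2 + n_v > 0` at every vertex. -/
def Stable {n : ℕ} (w : G.V → ℕ) (m : Fin n → G.V) : Prop :=
  ∀ v : G.V, 0 < 2 * (w v : ℤ) - 2 + (G.nv m v : ℤ)

/-- Contraction of a non-loop edge: the two half-edges of the edge are removed and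
the two (distinct) endpoints are identified. -/
def contractNonLoop (h0 : G.H) (hne : G.ep h0 ≠ G.ep (G.ι h0)) : Multigraph where
  V := {v : G.V // v ≠ G.ep (G.ι h0)}
  H := {x : G.H // x ≠ h0 ∧ x ≠ G.ι h0}
  ι x := ⟨G.ι x.1,
    fun hc => x.2.2 (by have := congrArg G.ι hc; rwa [G.ι_invol] at this),
    fun hc => x.2.1 (by have := congrArg G.ι hc; rwa [G.ι_invol, G.ι_invol] at this)⟩
  ι_invol x := Subtype.ext (G.ι_invol x.1)
  ι_ne x hc := G.ι_ne x.1 (congrArg Subtype.val hc)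
  ep x := if hx : G.ep x.1 = G.ep (G.ι h0) then ⟨G.ep h0, hne⟩ else ⟨G.ep x.1, hx⟩

/-- The map on vertices induced by contracting a non-loop edge. -/
def contractVertexMap (h0 : G.H) (hne : G.ep h0 ≠ G.ep (G.ι h0)) :
    G.V → (G.contractNonLoop h0 hne).V :=
  fun v => if hx : v = G.ep (G.ι h0) then ⟨G.ep h0, hne⟩ else ⟨v, hx⟩

/-- Deletion of an edge (both of its half-edges); vertices are unchanged. -/
def deleteEdge (h0 : G.H) : Multigraph where
  V := G.V
  H := {x : G.H // x ≠ h0 ∧ x ≠ G.ι h0}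
  ι x := ⟨G.ι x.1,
    fun hc => x.2.2 (by have := congrArg G.ι hc; rwa [G.ι_invol] at this),
    fun hc => x.2.1 (by have := congrArg G.ι hc; rwa [G.ι_invol, G.ι_invol] at this)⟩
  ι_invol x := Subtype.ext (G.ι_invol x.1)
  ι_ne x hc := G.ι_ne x.1 (congrArg Subtype.val hc)
  ep x := G.ep x.1

end Multigraph

/-- A stable weighted `n`-marked graph of genus `g`. -/
structure StableGraph (g : ℕ) (n : ℕ) where
  graph : Multigraph
  weight : graph.V → ℕ
  mark : Fin n → graph.V
  conn : graph.Connected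
  stable : graph.Stable weight mark
  genus_eq : graph.genus weight = (g : ℤ)

/-- An isomorphism of stable weighted `n`-marked graphs. -/
structure StableGraphIso {g n : ℕ} (A B : StableGraph g n) where
  eV : A.graph.V ≃ B.graph.V
  eH : A.graph.H ≃ B.graph.H
  comm_ι : ∀ h, eH (A.graph.ι h) = B.graph.ι (eH h)
  comm_ep : ∀ h, eV (A.graph.ep h) = B.graph.ep (eH h)
  comm_w : ∀ v, B.weight (eV v) = A.weight v
  comm_m : ∀ i, eV (A.mark i) = B.mark i

theorem sum_card_fiber_eq_card {α β : Type*} [Fintype α] [Fintype β] [DecidableEq β]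
    (f : α → β) : ∑ b, Fintype.card {a // f a = b} = Fintype.card α := by
  rw [← Fintype.card_sigma, Fintype.card_congr (Equiv.sigmaFiberEquiv f)]

theorem Finite.exists_fin_reps_of_map {α β : Type*} [Finite β] (R : α → α → Prop) (f : α → β)
    (hf : ∀ a b, f a = f b → R a b) : ∃ (k : ℕ) (reps : Fin k → α), ∀ a, ∃ i, R a (reps i) := by
  obtain ⟨k, ⟨e⟩⟩ := Finite.exists_equiv_fin (Set.range f)
  refine ⟨k, Set.rangeSplitting f ∘ e.symm, fun a => ⟨e ⟨f a, a, rfl⟩, hf _ _ ?_⟩⟩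
  simp [Set.apply_rangeSplitting]

namespace Multigraph

variable (G : Multigraph)

theorem sum_val : ∑ v, G.val v = Fintype.card G.H :=
  sum_card_fiber_eq_card G.ep

theorem sum_nMark {n : ℕ} (m : Fin n → G.V) : ∑ v, G.nMark m v = n :=
  (sum_card_fiber_eq_card m).trans (Fintype.card_fin n)

instance : DecidableEq G.E :=
  @Quotient.decidableEq _ G.edgeSetoid fun a b => inferInstanceAs (Decidable (b = a ∨ b = G.ι a))

def edge (h : G.H) : G.E := Quotient.mk G.edgeSetoid h

theorem edge_eq_edge_iff (a b : G.H) : G.edge b = G.edge a ↔ b = a ∨ b = G.ι a := by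
  change Quotient.mk _ b = Quotient.mk _ a ↔ _
  rw [Quotient.eq]
  change a = b ∨ a = G.ι b ↔ _
  constructor <;> rintro (rfl | rfl) <;> simp [G.ι_invol]

theorem card_H : Fintype.card G.H = 2 * G.numE := by
  have card_fiber (a : G.H) : Fintype.card {b // G.edge b = G.edge a} = 2 := by
    rw [Fintype.card_congr (Equiv.subtypeEquivRight fun b =>
        (G.edge_eq_edge_iff a b).trans (by simp : _ ↔ b ∈ ({a, G.ι a} : Finset G.H))),
      Fintype.card_coe, Finset.card_pair (G.ι_ne a).symm]
  calc Fintype.card G.H = ∑ e : G.E, Fintype.card {b // G.edge b = e} :=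
        (sum_card_fiber_eq_card G.edge).symm
    _ = ∑ _e : G.E, 2 := Finset.sum_congr rfl fun e _ => e.inductionOn card_fiber
    _ = 2 * G.numE := by simp [numE, mul_comm]

theorem sum_nv {n : ℕ} (m : Fin n → G.V) : ∑ v, G.nv m v = 2 * G.numE + n := by
  simp only [nv, Finset.sum_add_distrib, sum_val, sum_nMark, card_H]

variable {G} {n : ℕ} {w : G.V → ℕ} {m : Fin n → G.V}

theorem sum_two_mul_weight_sub_two_add_nv (w : G.V → ℕ) (m : Fin n → G.V) :
    ∑ v, (2 * (w v : ℤ) - 2 + G.nv m v) = 2 * G.genus w - 2 + n := by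
  have hnv : ∑ v, (G.nv m v : ℤ) = 2 * G.numE + n := by exact_mod_cast G.sum_nv m
  simp only [Finset.sum_add_distrib, Finset.sum_sub_distrib, ← Finset.mul_sum, hnv, genus, b1,
    Finset.sum_const, Finset.card_univ, numV]
  ring

theorem numV_le_of_stable (hs : G.Stable w m) : (G.numV : ℤ) ≤ 2 * G.genus w - 2 + n :=
  calc (G.numV : ℤ) = ∑ _v : G.V, 1 := by simp [numV]
    _ ≤ ∑ v, (2 * (w v : ℤ) - 2 + G.nv m v) := Finset.sum_le_sum fun v _ => hs v
    _ = 2 * G.genus w - 2 + n := sum_two_mul_weight_sub_two_add_nv w m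

theorem numE_le_of_stable (hs : G.Stable w m) : (G.numE : ℤ) ≤ 3 * G.genus w - 3 + n := by
  have := numV_le_of_stable hs
  have : 0 ≤ ∑ v, (w v : ℤ) := by positivity
  simp only [genus, b1] at *
  linarith

theorem weight_le_of_stable (hs : G.Stable w m) (v : G.V) :
    (w v : ℤ) ≤ 3 * G.genus w - 3 + n := by
  have := numV_le_of_stable hs
  have : (w v : ℤ) ≤ ∑ u, (w u : ℤ) :=
    Finset.single_le_sum (f := fun u => (w u : ℤ)) (fun _ _ => by positivity) (Finset.mem_univ v)
  simp only [genus, b1] at *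
  linarith

end Multigraph

namespace StableGraph

variable {g n : ℕ} (Γ : StableGraph g n)

theorem numE_le : (Γ.graph.numE : ℤ) ≤ 3 * (g : ℤ) - 3 + n :=
  Γ.genus_eq ▸ Multigraph.numE_le_of_stable Γ.stable

theorem numV_le : (Γ.graph.numV : ℤ) ≤ 2 * (g : ℤ) - 2 + n :=
  Γ.genus_eq ▸ Multigraph.numV_le_of_stable Γ.stable

theorem card_V_le : Fintype.card Γ.graph.V ≤ 2 * g + n := by
  have := Γ.numV_le
  simp only [Multigraph.numV] at this
  omega

theorem card_H_le : Fintype.card Γ.graph.H ≤ 6 * g + 2 * n := by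
  have := Γ.numE_le
  rw [Γ.graph.card_H]
  omega

theorem weight_le (v : Γ.graph.V) : Γ.weight v ≤ 3 * g + n := by
  have := Γ.genus_eq ▸ Multigraph.weight_le_of_stable Γ.stable v
  omega

def Code (g n : ℕ) : Type :=
  Σ pq : Fin (2 * g + n + 1) × Fin (6 * g + 2 * n + 1),
    (Fin pq.2 → Fin pq.2) × (Fin pq.2 → Fin pq.1) × (Fin pq.1 → Fin (3 * g + n + 1)) ×
      (Fin n → Fin pq.1)

instance (g n : ℕ) : Finite (Code g n) := by
  unfold Code; infer_instance

/-- The sizes `p, q` are free variables rather than `Fintype.card`s so that two equal codes can be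
compared after substituting `p₁ = p₂`, `q₁ = q₂`. -/
def codeWith {p q : ℕ} (eV : Γ.graph.V ≃ Fin p) (eH : Γ.graph.H ≃ Fin q)
    (hp : p < 2 * g + n + 1) (hq : q < 6 * g + 2 * n + 1) : Code g n :=
  ⟨(⟨p, hp⟩, ⟨q, hq⟩),
    (eH ∘ Γ.graph.ι ∘ eH.symm, eV ∘ Γ.graph.ep ∘ eH.symm,
      fun v => ⟨Γ.weight (eV.symm v), Nat.lt_succ_of_le (Γ.weight_le _)⟩, eV ∘ Γ.mark)⟩

theorem nonempty_iso_of_codeWith_eq {A B : StableGraph g n} {p₁ q₁ p₂ q₂ : ℕ}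
    {eV₁ : A.graph.V ≃ Fin p₁} {eH₁ : A.graph.H ≃ Fin q₁} {hp₁ hq₁}
    {eV₂ : B.graph.V ≃ Fin p₂} {eH₂ : B.graph.H ≃ Fin q₂} {hp₂ hq₂}
    (h : A.codeWith eV₁ eH₁ hp₁ hq₁ = B.codeWith eV₂ eH₂ hp₂ hq₂) :
    Nonempty (StableGraphIso A B) := by
  obtain ⟨hpq, hdata⟩ := Sigma.mk.inj_iff.mp h
  obtain ⟨rfl, rfl⟩ : p₁ = p₂ ∧ q₁ = q₂ := by simpa [Fin.ext_iff] using hpq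
  simp only [heq_eq_eq, Prod.mk.injEq] at hdata
  obtain ⟨hι, hep, hw, hm⟩ := hdata
  refine ⟨⟨eV₁.trans eV₂.symm, eH₁.trans eH₂.symm, fun a => ?_, fun a => ?_, fun v => ?_,
    fun i => ?_⟩⟩
  · simpa [Equiv.symm_apply_eq] using congrFun hι (eH₁ a)
  · simpa [Equiv.symm_apply_eq] using congrFun hep (eH₁ a)
  · simpa [Fin.ext_iff] using (congrFun hw (eV₁ v)).symm
  · simpa [Equiv.symm_apply_eq] using congrFun hm i

noncomputable def code : Code g n :=
  Γ.codeWith (Fintype.equivFin _) (Fintype.equivFin _)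
    (Nat.lt_succ_of_le Γ.card_V_le) (Nat.lt_succ_of_le Γ.card_H_le)

end StableGraph

theorem edge_vertex_bounds_and_finiteness_general (g n : ℕ) :
    (∀ Γ : StableGraph g n,
        (Γ.graph.numE : ℤ) ≤ 3 * (g : ℤ) - 3 + n ∧
        (Γ.graph.numV : ℤ) ≤ 2 * (g : ℤ) - 2 + n) ∧
    ∃ (k : ℕ) (reps : Fin k → StableGraph g n),
      ∀ Γ : StableGraph g n, ∃ i : Fin k, Nonempty (StableGraphIso Γ (reps i)) :=
  ⟨fun Γ => ⟨Γ.numE_le, Γ.numV_le⟩,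
    Finite.exists_fin_reps_of_map _ StableGraph.code fun _ _ h =>
      StableGraph.nonempty_iso_of_codeWith_eq h⟩

/-- for a stable weighted `n`-marked graph of genus `g`,
`|E| ≤ 3g − 3 + n` and `|V| ≤ 2g − 2 + n`; consequently, for fixed `g, n` with
`2g − 2 + n > 0` there are only finitely many isomorphism classes of stable graphs. -/
theorem edge_vertex_bounds_and_finiteness (g n : ℕ) (hgn : 0 < 2 * (g : ℤ) - 2 + n) :
    (∀ Γ : StableGraph g n,
        (Γ.graph.numE : ℤ) ≤ 3 * (g : ℤ) - 3 + n ∧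
        (Γ.graph.numV : ℤ) ≤ 2 * (g : ℤ) - 2 + n) ∧
    ∃ (k : ℕ) (reps : Fin k → StableGraph g n),
      ∀ Γ : StableGraph g n, ∃ i : Fin k, Nonempty (StableGraphIso Γ (reps i)) :=
  edge_vertex_bounds_and_finiteness_general g n
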